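/- Fix S > 0, ξ < 0, and let x₀ ∈ (0,1) be the unique zero of g(x) = (1/√(2π))·exp(−(ξ − (1/S)ln x)²/2) + ξ·N(ξ − (1/S)ln x). Define f(x) = N(ξ + (1/S)ln x) − x^{−2ξ/S}·N(ξ − (1/S)ln x). Then f is strictly decreasing on (0, x₀) and strictly increasing on (x₀, +∞); in particular f(x) < 0 for x ∈ (0,1) and f(x) > 0 for x > 1. -/

import Mathlib

open Real Set Filter Topology

noncomputable def stdNormalCDF (x : ℝ) : ℝ :=
  (Real.sqrt (2 * Real.pi))⁻¹ * ∫ t in Set.Iic x, Real.exp (-t ^ 2 / 2)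

/-!
Write `φ = gaussianPDFReal 0 1` and `u = ξ - log x / S`. Because `φ(ξ + L) = x^(-2ξ/S) φ(ξ - L)`
for `L = log x / S`, the density terms in `f'` combine and `f' = (2/S) x^(-2ξ/S - 1) g`, so `f`
falls where `g < 0` and rises where `g > 0`. On `(0, 1]`, `g' = -φ(u) log x / (S² x) > 0`, so `g`
changes sign only at `x₀`; for `x > 1` the tail bound `-u N(u) ≤ φ(u)` with `u < ξ` gives
`g(x) ≥ (ξ - u) N(u) > 0`. Since `f(0+) = f(1) = 0`, the sign of `f` follows.
-/

open MeasureTheory ProbabilityTheory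

lemma gaussianPDFReal_zero_one (x : ℝ) :
    gaussianPDFReal 0 1 x = (√(2 * π))⁻¹ * exp (-x ^ 2 / 2) := by
  simp [gaussianPDFReal]

lemma continuous_gaussianPDFReal_zero_one : Continuous (gaussianPDFReal 0 1) := by
  simp_rw [funext gaussianPDFReal_zero_one]; fun_prop

lemma stdNormalCDF_eq_integral (x : ℝ) :
    stdNormalCDF x = ∫ t in Iic x, gaussianPDFReal 0 1 t := by
  simp only [stdNormalCDF, gaussianPDFReal_zero_one, integral_const_mul]

lemma stdNormalCDF_eq_cdf (x : ℝ) : stdNormalCDF x = cdf (gaussianReal 0 1) x := by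
  rw [cdf_eq_real, measureReal_def, gaussianReal_apply_eq_integral _ one_ne_zero,
    ENNReal.toReal_ofReal (integral_nonneg fun _ => gaussianPDFReal_nonneg _ _ _),
    stdNormalCDF_eq_integral]

lemma stdNormalCDF_pos (x : ℝ) : 0 < stdNormalCDF x := by
  rw [stdNormalCDF_eq_cdf, cdf_eq_real, measureReal_def]
  refine ENNReal.toReal_pos ?_ (measure_ne_top _ _)
  exact fun h => by simpa using gaussianReal_absolutelyContinuous' 0 one_ne_zero h

lemma stdNormalCDF_le_one (x : ℝ) : stdNormalCDF x ≤ 1 :=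
  stdNormalCDF_eq_cdf x ▸ cdf_le_one _ x

lemma tendsto_stdNormalCDF_atBot : Tendsto stdNormalCDF atBot (𝓝 0) := by
  simpa only [← funext stdNormalCDF_eq_cdf] using tendsto_cdf_atBot (gaussianReal 0 1)

lemma hasDerivAt_stdNormalCDF (x : ℝ) : HasDerivAt stdNormalCDF (gaussianPDFReal 0 1 x) x := by
  have hint : Integrable (gaussianPDFReal 0 1) := integrable_gaussianPDFReal 0 1
  have hsplit : stdNormalCDF = fun y =>
      (∫ t in Iic 0, gaussianPDFReal 0 1 t) + ∫ t in (0 : ℝ)..y, gaussianPDFReal 0 1 t := by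
    ext y
    rw [stdNormalCDF_eq_integral, ← intervalIntegral.integral_Iic_sub_Iic hint.integrableOn
      hint.integrableOn, add_sub_cancel]
  rw [hsplit]
  exact (intervalIntegral.integral_hasDerivAt_right hint.intervalIntegrable
    hint.aestronglyMeasurable.stronglyMeasurableAtFilter
    continuous_gaussianPDFReal_zero_one.continuousAt).const_add _

lemma hasDerivAt_gaussianPDFReal_zero_one (x : ℝ) :
    HasDerivAt (gaussianPDFReal 0 1) (-x * gaussianPDFReal 0 1 x) x := by
  simp_rw [funext gaussianPDFReal_zero_one]
  have h : HasDerivAt (fun t : ℝ => -t ^ 2 / 2) (-x) x :=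
    ((((hasDerivAt_id x).fun_pow 2).fun_neg).div_const 2).congr_deriv (by simp; ring)
  exact (h.exp.const_mul _).congr_deriv (by ring)

lemma tendsto_gaussianPDFReal_zero_one_atBot : Tendsto (gaussianPDFReal 0 1) atBot (𝓝 0) := by
  have := ((tendsto_rpow_abs_mul_exp_neg_mul_sq_cocompact one_half_pos 0).const_mul
    (√(2 * π))⁻¹).mono_left atBot_le_cocompact
  convert this using 2 with x
  · rw [gaussianPDFReal_zero_one, rpow_zero]; ring_nf
  · simp

lemma neg_mul_stdNormalCDF_le (u : ℝ) : -u * stdNormalCDF u ≤ gaussianPDFReal 0 1 u := by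
  have hint : Integrable fun t => -t * gaussianPDFReal 0 1 t := by
    convert ((integrable_mul_exp_neg_mul_sq one_half_pos).const_mul (-(√(2 * π))⁻¹)) using 2
    rw [gaussianPDFReal_zero_one]; ring_nf
  have hφ : ∫ t in Iic u, -t * gaussianPDFReal 0 1 t = gaussianPDFReal 0 1 u := by
    simpa using integral_Iic_of_hasDerivAt_of_tendsto'
      (fun t _ => hasDerivAt_gaussianPDFReal_zero_one t) hint.integrableOn
      tendsto_gaussianPDFReal_zero_one_atBot
  rw [stdNormalCDF_eq_integral, ← hφ, ← integral_const_mul]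
  refine setIntegral_mono_on ((integrable_gaussianPDFReal 0 1).const_mul _).integrableOn
    hint.integrableOn measurableSet_Iic fun t ht => ?_
  exact mul_le_mul_of_nonneg_right (neg_le_neg ht) (gaussianPDFReal_nonneg _ _ _)

lemma gaussianPDFReal_zero_one_add (a b : ℝ) :
    gaussianPDFReal 0 1 (a + b) = exp (-(2 * a * b)) * gaussianPDFReal 0 1 (a - b) := by
  rw [gaussianPDFReal_zero_one, gaussianPDFReal_zero_one, mul_left_comm, ← exp_add]
  ring_nf

lemma strictMonoOn_of_hasDerivAt_pos {D : Set ℝ} (hD : Convex ℝ D) {f f' : ℝ → ℝ}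
    (hf : ∀ x ∈ D, HasDerivAt f (f' x) x) (hf' : ∀ x ∈ interior D, 0 < f' x) :
    StrictMonoOn f D :=
  strictMonoOn_of_hasDerivWithinAt_pos hD (fun x hx => (hf x hx).continuousAt.continuousWithinAt)
    (fun x hx => (hf x (interior_subset hx)).hasDerivWithinAt) hf'

lemma strictAntiOn_of_hasDerivAt_neg {D : Set ℝ} (hD : Convex ℝ D) {f f' : ℝ → ℝ}
    (hf : ∀ x ∈ D, HasDerivAt f (f' x) x) (hf' : ∀ x ∈ interior D, f' x < 0) :
    StrictAntiOn f D :=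
  strictAntiOn_of_hasDerivWithinAt_neg hD (fun x hx => (hf x hx).continuousAt.continuousWithinAt)
    (fun x hx => (hf x (interior_subset hx)).hasDerivWithinAt) hf'

lemma StrictAntiOn.lt_of_tendsto_nhdsGT {f : ℝ → ℝ} {a b L x : ℝ} (hf : StrictAntiOn f (Ioo a b))
    (hlim : Tendsto f (𝓝[>] a) (𝓝 L)) (hx : x ∈ Ioo a b) : f x < L := by
  obtain ⟨y, hay, hyx⟩ := exists_between hx.1
  have hy : y ∈ Ioo a b := ⟨hay, hyx.trans hx.2⟩
  have hyL : f y ≤ L := ge_of_tendsto hlim <| by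
    filter_upwards [Ioo_mem_nhdsGT hay] with z hz
    exact (hf ⟨hz.1, hz.2.trans hy.2⟩ hy hz.2).le
  exact (hf hy hx hyx).trans_le hyL

noncomputable def gFun (S ξ x : ℝ) : ℝ :=
  gaussianPDFReal 0 1 (ξ - 1 / S * log x) + ξ * stdNormalCDF (ξ - 1 / S * log x)

noncomputable def fFun (S ξ x : ℝ) : ℝ :=
  stdNormalCDF (ξ + 1 / S * log x) - x ^ (-2 * ξ / S) * stdNormalCDF (ξ - 1 / S * log x)

section

variable {S ξ x : ℝ}

lemma hasDerivAt_gFun (hx : 0 < x) :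
    HasDerivAt (gFun S ξ)
      (-(log x / (S ^ 2 * x)) * gaussianPDFReal 0 1 (ξ - 1 / S * log x)) x := by
  have hu := ((hasDerivAt_log hx.ne').const_mul (1 / S)).const_sub ξ
  have := ((hasDerivAt_gaussianPDFReal_zero_one _).comp x hu).add
    (((hasDerivAt_stdNormalCDF _).comp x hu).const_mul ξ)
  exact this.congr_deriv (by ring)

lemma strictMonoOn_gFun (hS : S ≠ 0) : StrictMonoOn (gFun S ξ) (Ioc 0 1) := by
  refine strictMonoOn_of_hasDerivAt_pos (convex_Ioc 0 1) (fun x hx => hasDerivAt_gFun hx.1)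
    fun x hx => ?_
  rw [interior_Ioc] at hx
  have hlog : log x < 0 := log_neg hx.1 hx.2
  have hφ := gaussianPDFReal_pos 0 1 (ξ - 1 / S * log x) one_ne_zero
  have hSx : 0 < S ^ 2 * x := mul_pos (sq_pos_of_ne_zero hS) hx.1
  exact mul_pos (neg_pos.2 (div_neg_of_neg_of_pos hlog hSx)) hφ

lemma gFun_pos_of_one_lt (hS : 0 < S) (hx : 1 < x) : 0 < gFun S ξ x := by
  set u := ξ - 1 / S * log x
  have hξu : 0 < ξ - u := by
    rw [show ξ - u = 1 / S * log x by ring]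
    exact mul_pos (by positivity) (log_pos hx)
  calc 0 < (ξ - u) * stdNormalCDF u := mul_pos hξu (stdNormalCDF_pos u)
    _ ≤ gFun S ξ x := by
      have := neg_mul_stdNormalCDF_le u
      simp only [gFun]
      linarith

lemma hasDerivAt_fFun (hx : 0 < x) :
    HasDerivAt (fFun S ξ) (2 / S * x ^ (-2 * ξ / S - 1) * gFun S ξ x) x := by
  have hl := (hasDerivAt_log hx.ne').const_mul (1 / S)
  have := ((hasDerivAt_stdNormalCDF _).comp x (hl.const_add ξ)).sub
    ((hasDerivAt_rpow_const (p := -2 * ξ / S) (Or.inl hx.ne')).mul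
      ((hasDerivAt_stdNormalCDF _).comp x (hl.const_sub ξ)))
  refine this.congr_deriv ?_
  simp only [Function.comp_apply]
  have hpow : exp (-(2 * ξ * (1 / S * log x))) = x ^ (-2 * ξ / S) := by
    rw [rpow_def_of_pos hx]; ring_nf
  rw [gaussianPDFReal_zero_one_add, hpow, gFun, rpow_sub_one hx.ne']
  field_simp
  ring

lemma tendsto_fFun_nhdsGT_zero (hS : 0 < S) (hξ : ξ < 0) :
    Tendsto (fFun S ξ) (𝓝[>] 0) (𝓝 0) := by
  have hp : 0 < -2 * ξ / S := div_pos (by linarith) hS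
  have hlog : Tendsto (fun x => 1 / S * log x) (𝓝[>] 0) atBot :=
    tendsto_log_nhdsGT_zero.const_mul_atBot (by positivity)
  have hfirst := tendsto_stdNormalCDF_atBot.comp (tendsto_atBot_add_const_left _ ξ hlog)
  have hpow : Tendsto (fun x : ℝ => x ^ (-2 * ξ / S)) (𝓝[>] 0) (𝓝 0) := by
    have := (continuousAt_rpow_const 0 _ (Or.inr hp.le)).tendsto.mono_left
      (nhdsWithin_le_nhds (s := Ioi 0))
    rwa [zero_rpow hp.ne'] at this
  have hsecond : Tendsto (fun x : ℝ => x ^ (-2 * ξ / S) * stdNormalCDF (ξ - 1 / S * log x))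
      (𝓝[>] 0) (𝓝 0) := by
    refine tendsto_of_tendsto_of_tendsto_of_le_of_le' tendsto_const_nhds hpow ?_ ?_ <;>
      filter_upwards [self_mem_nhdsWithin] with x hx
    · exact mul_nonneg (rpow_nonneg hx.le _) (stdNormalCDF_pos _).le
    · exact mul_le_of_le_one_right (rpow_nonneg hx.le _) (stdNormalCDF_le_one _)
  have := hfirst.sub hsecond
  rwa [sub_zero] at this

lemma fFun_one (S ξ : ℝ) : fFun S ξ 1 = 0 := by
  simp [fFun]

variable {x₀ : ℝ}

lemma gFun_neg_of_lt (hS : S ≠ 0) (hx₀ : x₀ ≤ 1) (hgx₀ : gFun S ξ x₀ = 0) (hx : x ∈ Ioo 0 x₀) :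
    gFun S ξ x < 0 :=
  hgx₀ ▸ strictMonoOn_gFun hS ⟨hx.1, hx.2.le.trans hx₀⟩ ⟨hx.1.trans hx.2, hx₀⟩ hx.2

lemma gFun_pos_of_gt (hS : 0 < S) (hx₀ : 0 < x₀) (hgx₀ : gFun S ξ x₀ = 0) (hx : x₀ < x) :
    0 < gFun S ξ x := by
  rcases le_or_gt x 1 with h1 | h1
  · exact hgx₀ ▸ strictMonoOn_gFun hS.ne' ⟨hx₀, hx.le.trans h1⟩ ⟨hx₀.trans hx, h1⟩ hx
  · exact gFun_pos_of_one_lt hS h1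

lemma strictAntiOn_fFun (hS : 0 < S) (hx₀ : x₀ ≤ 1) (hgx₀ : gFun S ξ x₀ = 0) :
    StrictAntiOn (fFun S ξ) (Ioo 0 x₀) := by
  refine strictAntiOn_of_hasDerivAt_neg (convex_Ioo 0 x₀) (fun x hx => hasDerivAt_fFun hx.1)
    fun x hx => ?_
  rw [interior_Ioo] at hx
  have hx0 := hx.1
  exact mul_neg_of_pos_of_neg (by positivity) (gFun_neg_of_lt hS.ne' hx₀ hgx₀ hx)

lemma strictMonoOn_fFun (hS : 0 < S) (hx₀ : 0 < x₀) (hgx₀ : gFun S ξ x₀ = 0) :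
    StrictMonoOn (fFun S ξ) (Ici x₀) := by
  refine strictMonoOn_of_hasDerivAt_pos (convex_Ici x₀)
    (fun x hx => hasDerivAt_fFun (hx₀.trans_le hx)) fun x hx => ?_
  rw [interior_Ici] at hx
  have hx0 := hx₀.trans hx
  exact mul_pos (by positivity) (gFun_pos_of_gt hS hx₀ hgx₀ hx)

end

theorem f_monotonicity_with_zero (S ξ x₀ : ℝ) (hS : 0 < S) (hξ : ξ < 0)
    (g f : ℝ → ℝ)
    (hg : ∀ x > 0, g x = (Real.sqrt (2 * Real.pi))⁻¹ *
        Real.exp (-(ξ - (1 / S) * Real.log x) ^ 2 / 2) +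
        ξ * stdNormalCDF (ξ - (1 / S) * Real.log x))
    (hx₀ : x₀ ∈ Set.Ioo (0 : ℝ) 1) (hgx₀ : g x₀ = 0)
    (hf : ∀ x > 0, f x = stdNormalCDF (ξ + (1 / S) * Real.log x) -
        x ^ (-2 * ξ / S) * stdNormalCDF (ξ - (1 / S) * Real.log x)) :
    StrictAntiOn f (Set.Ioo 0 x₀) ∧ StrictMonoOn f (Set.Ioi x₀) ∧
    (∀ x ∈ Set.Ioo (0 : ℝ) 1, f x < 0) ∧ ∀ x > 1, 0 < f x := by
  obtain ⟨hx₀0, hx₀1⟩ := hx₀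
  have hfF : EqOn f (fFun S ξ) (Ioi 0) := hf
  have hgx₀' : gFun S ξ x₀ = 0 := by rwa [gFun, gaussianPDFReal_zero_one, ← hg x₀ hx₀0]
  have hanti := strictAntiOn_fFun hS hx₀1.le hgx₀'
  have hmono := strictMonoOn_fFun hS hx₀0 hgx₀'
  refine ⟨hanti.congr (hfF.symm.mono Ioo_subset_Ioi_self),
    (hmono.mono Ioi_subset_Ici_self).congr (hfF.symm.mono (Ioi_subset_Ioi hx₀0.le)),
    fun x hx => ?_, fun x hx => ?_⟩
  · rw [hfF hx.1]
    rcases lt_or_ge x x₀ with h | h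
    · exact hanti.lt_of_tendsto_nhdsGT (tendsto_fFun_nhdsGT_zero hS hξ) ⟨hx.1, h⟩
    · exact fFun_one S ξ ▸ hmono h hx₀1.le hx.2
  · rw [hfF (zero_lt_one.trans hx)]
    exact fFun_one S ξ ▸ hmono hx₀1.le (hx₀1.trans hx).le hx
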